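/- Let b : ℝⁿ → ℝⁿ be globally Lipschitz and T > 0. For every φ ∈ H¹([0,T]; ℝⁿ) and every sequence {φ_h} ⊂ H¹([0,T]; ℝⁿ) converging weakly to φ in H¹([0,T]; ℝⁿ), the lim-inf inequality S_T(φ) ≤ liminf_{h→0} S_T(φ_h) holds; i.e. S_T is sequentially weakly lower semicontinuous on H¹([0,T]; ℝⁿ). -/

import Mathlib

open MeasureTheory Filter intervalIntegral
open scoped RealInnerProductSpace Topology

noncomputable section

/-- `φ` is an `H¹` path on `[0,T]` with (weak) derivative `dφ`:
`dφ` is square integrable on `(0,T)` and `φ` is the primitive of `dφ`. -/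
def IsH1Path {n : ℕ} (T : ℝ) (φ dφ : ℝ → EuclideanSpace ℝ (Fin n)) : Prop :=
  MeasureTheory.MemLp dφ 2 (MeasureTheory.volume.restrict (Set.Ioc (0:ℝ) T)) ∧
  ∀ t ∈ Set.Icc (0:ℝ) T, φ t = φ 0 + ∫ s in (0:ℝ)..t, dφ s

/-- The Freidlin–Wentzell action functional `S_T(φ) = (1/2)∫₀ᵀ ‖φ' - b(φ)‖² dt`. -/
def action {n : ℕ} (b : EuclideanSpace ℝ (Fin n) → EuclideanSpace ℝ (Fin n))
    (T : ℝ) (φ dφ : ℝ → EuclideanSpace ℝ (Fin n)) : ℝ :=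
  (1/2) * ∫ t in (0:ℝ)..T, ‖dφ t - b (φ t)‖^2

/-- The `L²(0,T)` norm of an `ℝⁿ`-valued function. -/
def L2norm {n : ℕ} (T : ℝ) (f : ℝ → EuclideanSpace ℝ (Fin n)) : ℝ :=
  Real.sqrt (∫ t in (0:ℝ)..T, ‖f t‖^2)

/-- The admissible set `A_T` of `H¹` transition paths from `x₁` to `x₂` on `[0,T]`. -/
def Adm {n : ℕ} (T : ℝ) (x₁ x₂ : EuclideanSpace ℝ (Fin n))
    (φ dφ : ℝ → EuclideanSpace ℝ (Fin n)) : Prop :=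
  IsH1Path T φ dφ ∧ φ 0 = x₁ ∧ φ T = x₂

/-- The rescaled action `S(T, φ̄) = (T/2)∫₀¹ ‖T⁻¹ φ̄' - b(φ̄)‖² ds` on `[0,1]`. -/
def Ssc {n : ℕ} (b : EuclideanSpace ℝ (Fin n) → EuclideanSpace ℝ (Fin n))
    (T : ℝ) (φ dφ : ℝ → EuclideanSpace ℝ (Fin n)) : ℝ :=
  (T/2) * ∫ s in (0:ℝ)..1, ‖T⁻¹ • dφ s - b (φ s)‖^2

/-- The optimal linear time scaling `T̂(φ̄) = ‖φ̄'‖_{L²} / ‖b(φ̄)‖_{L²}`. -/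
def That {n : ℕ} (b : EuclideanSpace ℝ (Fin n) → EuclideanSpace ℝ (Fin n))
    (φ dφ : ℝ → EuclideanSpace ℝ (Fin n)) : ℝ :=
  L2norm 1 dφ / L2norm 1 (fun s => b (φ s))

/-- The reformulated action `Ŝ(φ̄) = ‖φ̄'‖_{L²} ‖b(φ̄)‖_{L²} − ∫₀¹⟨φ̄', b(φ̄)⟩ ds`. -/
def Shat {n : ℕ} (b : EuclideanSpace ℝ (Fin n) → EuclideanSpace ℝ (Fin n))
    (φ dφ : ℝ → EuclideanSpace ℝ (Fin n)) : ℝ :=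
  L2norm 1 dφ * L2norm 1 (fun s => b (φ s)) - ∫ s in (0:ℝ)..1, ⟪dφ s, b (φ s)⟫

/-- `a` and `c` are adjacent nodes of the partition (finite node set) `P`. -/
def Adjacent (P : Finset ℝ) (a c : ℝ) : Prop :=
  a ∈ P ∧ c ∈ P ∧ a < c ∧ ∀ p ∈ P, p ≤ a ∨ c ≤ p

/-- `φ` is affine on each element of the partition `P`. -/
def PiecewiseAffineOn {n : ℕ} (P : Finset ℝ) (φ : ℝ → EuclideanSpace ℝ (Fin n)) : Prop :=
  ∀ a c, Adjacent P a c → ∀ t ∈ Set.Icc a c,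
    φ t = φ a + ((t - a) / (c - a)) • (φ c - φ a)

/-- `P` is a partition (node set) of `[0,T]`. -/
def IsPartition (T : ℝ) (P : Finset ℝ) : Prop :=
  (0:ℝ) ∈ P ∧ T ∈ P ∧ ∀ p ∈ P, p ∈ Set.Icc (0:ℝ) T

/-- Weak convergence `φ_k ⇀ φ` in `H¹((0,T); ℝⁿ)`, expressed by testing the pair
`(φ_k, φ_k')` against arbitrary pairs of `L²` functions. -/
def WeakH1Tendsto {n : ℕ} (T : ℝ) (φk dφk : ℕ → ℝ → EuclideanSpace ℝ (Fin n))
    (φ dφ : ℝ → EuclideanSpace ℝ (Fin n)) : Prop :=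
  ∀ g₀ g₁ : ℝ → EuclideanSpace ℝ (Fin n),
    MeasureTheory.MemLp g₀ 2 (MeasureTheory.volume.restrict (Set.Ioc (0:ℝ) T)) →
    MeasureTheory.MemLp g₁ 2 (MeasureTheory.volume.restrict (Set.Ioc (0:ℝ) T)) →
    Tendsto (fun k => (∫ t in (0:ℝ)..T, ⟪φk k t, g₀ t⟫) + ∫ t in (0:ℝ)..T, ⟪dφk k t, g₁ t⟫)
      atTop (𝓝 ((∫ t in (0:ℝ)..T, ⟪φ t, g₀ t⟫) + ∫ t in (0:ℝ)..T, ⟪dφ t, g₁ t⟫))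

/-- Values of `S_T` over the admissible set `A_T` (Problem I). -/
def probISet {n : ℕ} (b : EuclideanSpace ℝ (Fin n) → EuclideanSpace ℝ (Fin n))
    (T : ℝ) (x₁ x₂ : EuclideanSpace ℝ (Fin n)) : Set ℝ :=
  {v | ∃ φ dφ, Adm T x₁ x₂ φ dφ ∧ v = action b T φ dφ}

/-- Values of `S_T` over all `T > 0` and `φ ∈ A_T` (Problem II); its infimum is the
quasi-potential `V(x₁,x₂)`. -/
def probIISet {n : ℕ} (b : EuclideanSpace ℝ (Fin n) → EuclideanSpace ℝ (Fin n))
    (x₁ x₂ : EuclideanSpace ℝ (Fin n)) : Set ℝ :=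
  {v | ∃ T, 0 < T ∧ ∃ φ dφ, Adm T x₁ x₂ φ dφ ∧ v = action b T φ dφ}

/-- Values of `Ŝ` over the rescaled admissible set `A₁`. -/
def shatSet {n : ℕ} (b : EuclideanSpace ℝ (Fin n) → EuclideanSpace ℝ (Fin n))
    (x₁ x₂ : EuclideanSpace ℝ (Fin n)) : Set ℝ :=
  {v | ∃ φ dφ, Adm 1 x₁ x₂ φ dφ ∧ v = Shat b φ dφ}

/-- Membership in the finite element space `B_h` of continuous piecewise affine
admissible paths associated with the partition `P`. -/
def BmemP {n : ℕ} (P : Finset ℝ) (T : ℝ) (x₁ x₂ : EuclideanSpace ℝ (Fin n))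
    (φ dφ : ℝ → EuclideanSpace ℝ (Fin n)) : Prop :=
  Adm T x₁ x₂ φ dφ ∧ PiecewiseAffineOn P φ

/-- Values of `S_T` over the finite element space `B_h` (the discretized Problem I). -/
def discSet {n : ℕ} (b : EuclideanSpace ℝ (Fin n) → EuclideanSpace ℝ (Fin n))
    (P : Finset ℝ) (T : ℝ) (x₁ x₂ : EuclideanSpace ℝ (Fin n)) : Set ℝ :=
  {v | ∃ φ dφ, BmemP P T x₁ x₂ φ dφ ∧ v = action b T φ dφ}

/-- Values of `Ŝ` over the finite element space `B̄_h` (the discretized Problem II). -/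
def discShatSet {n : ℕ} (b : EuclideanSpace ℝ (Fin n) → EuclideanSpace ℝ (Fin n))
    (P : Finset ℝ) (x₁ x₂ : EuclideanSpace ℝ (Fin n)) : Set ℝ :=
  {v | ∃ φ dφ, BmemP P 1 x₁ x₂ φ dφ ∧ v = Shat b φ dφ}


/-!
Write `S_T(φ) = ½‖φ' - b ∘ φ‖²` in `L²(0,T)`. Weak `H¹` convergence makes `φ_k'` converge
weakly in `L²`, so the `φ_k'` are bounded (Banach–Steinhaus) and, testing against indicators of
`(0,t]`, the primitives `∫₀ᵗ φ_k'` converge pointwise. Testing against constants then gives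
`φ_k(0) → φ(0)`, so `φ_k → φ` pointwise on `[0,T]`, with a uniform bound. By bounded convergence
`b ∘ φ_k → b ∘ φ` strongly in `L²`, hence `φ_k' - b ∘ φ_k ⇀ φ' - b ∘ φ` weakly, and `½‖·‖²` is
weakly lower semicontinuous.
-/

open Set

section InnerProductSpace

variable {H : Type*} [NormedAddCommGroup H] [InnerProductSpace ℝ H] {x : ℕ → H} {y : H}

theorem tendsto_of_tendsto_inner [FiniteDimensional ℝ H]
    (h : ∀ v, Tendsto (fun k => ⟪x k, v⟫) atTop (𝓝 ⟪y, v⟫)) : Tendsto x atTop (𝓝 y) := by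
  let e := stdOrthonormalBasis ℝ H
  have hx : x = fun k => ∑ i, ⟪e i, x k⟫ • e i := funext fun k => (e.sum_repr' (x k)).symm
  rw [hx, ← e.sum_repr' y]
  refine tendsto_finsetSum _ fun i _ => ?_
  simpa only [real_inner_comm (e i)] using (h (e i)).smul_const (e i)

theorem exists_norm_le_of_tendsto_inner [CompleteSpace H]
    (h : ∀ v, Tendsto (fun k => ⟪x k, v⟫) atTop (𝓝 ⟪y, v⟫)) : ∃ C, ∀ k, ‖x k‖ ≤ C := by
  obtain ⟨C, hC⟩ : ∃ C, ∀ k, ‖innerSL ℝ (x k)‖ ≤ C := banach_steinhaus fun v => by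
    obtain ⟨B, hB⟩ := (h v).norm.bddAbove_range
    exact ⟨B, fun k => hB ⟨k, rfl⟩⟩
  exact ⟨C, fun k => (innerSL_apply_norm ℝ (x k)).symm.trans_le (hC k)⟩

theorem half_norm_sq_le_liminf_of_tendsto_inner [CompleteSpace H]
    (h : ∀ v, Tendsto (fun k => ⟪x k, v⟫) atTop (𝓝 ⟪y, v⟫)) :
    1 / 2 * ‖y‖ ^ 2 ≤ liminf (fun k => 1 / 2 * ‖x k‖ ^ 2) atTop := by
  obtain ⟨C, hC⟩ := exists_norm_le_of_tendsto_inner h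
  -- `½‖x‖² ≥ ⟪x, y⟫ - ½‖y‖²`, and the right-hand side tends to `½‖y‖²`
  have hlim : Tendsto (fun k => ⟪x k, y⟫ - 1 / 2 * ‖y‖ ^ 2) atTop (𝓝 (1 / 2 * ‖y‖ ^ 2)) := by
    convert (h y).sub_const (1 / 2 * ‖y‖ ^ 2) using 2
    rw [real_inner_self_eq_norm_sq]
    ring
  rw [← hlim.liminf_eq]
  refine liminf_le_liminf (Eventually.of_forall fun k => ?_) hlim.isBoundedUnder_ge
    (isCoboundedUnder_ge_of_le atTop (x := 1 / 2 * C ^ 2) fun k => ?_)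
  · linarith [norm_sub_sq_real (x k) y, sq_nonneg ‖x k - y‖]
  · gcongr
    exact hC k

end InnerProductSpace

section L2

variable {α E : Type*} [MeasurableSpace α] {μ : Measure α}
  [NormedAddCommGroup E] [InnerProductSpace ℝ E]

theorem MeasureTheory.MemLp.inner_toLp_left {f : α → E} (hf : MemLp f 2 μ) (G : Lp E 2 μ) :
    ⟪hf.toLp f, G⟫ = ∫ a, ⟪f a, G a⟫ ∂μ := by
  rw [L2.inner_def]
  refine integral_congr_ae ?_
  filter_upwards [hf.coeFn_toLp] with a ha
  rw [ha]

theorem MeasureTheory.MemLp.norm_toLp_sq {f : α → E} (hf : MemLp f 2 μ) :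
    ‖hf.toLp f‖ ^ 2 = ∫ a, ‖f a‖ ^ 2 ∂μ := by
  rw [← real_inner_self_eq_norm_sq, hf.inner_toLp_left]
  refine integral_congr_ae ?_
  filter_upwards [hf.coeFn_toLp] with a ha
  rw [ha, real_inner_self_eq_norm_sq]

theorem tendsto_toLp_of_tendsto_ae_of_norm_le [IsFiniteMeasure μ] {f : ℕ → α → E} {g : α → E}
    (hf : ∀ k, MemLp (f k) 2 μ) (hg : MemLp g 2 μ) {C : ℝ} (hC : ∀ k, ∀ᵐ a ∂μ, ‖f k a‖ ≤ C)
    (hfg : ∀ᵐ a ∂μ, Tendsto (fun k => f k a) atTop (𝓝 (g a))) :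
    Tendsto (fun k => (hf k).toLp (f k)) atTop (𝓝 (hg.toLp g)) := by
  have hgC : ∀ᵐ a ∂μ, ‖g a‖ ≤ C := by
    filter_upwards [ae_all_iff.2 hC, hfg] with a ha hlim
    exact le_of_tendsto' hlim.norm ha
  have hsq : Tendsto (fun k => ∫ a, ‖f k a - g a‖ ^ 2 ∂μ) atTop (𝓝 0) := by
    have hbound : ∀ k, ∀ᵐ a ∂μ, ‖‖f k a - g a‖ ^ 2‖ ≤ (2 * C) ^ 2 := fun k => by
      filter_upwards [hC k, hgC] with a hfa hga
      rw [Real.norm_eq_abs, abs_pow, abs_norm]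
      gcongr
      linarith [norm_sub_le (f k a) (g a)]
    have hlim : ∀ᵐ a ∂μ, Tendsto (fun k => ‖f k a - g a‖ ^ 2) atTop (𝓝 0) := by
      filter_upwards [hfg] with a ha
      simpa using (ha.sub_const (g a)).norm.pow 2
    simpa using tendsto_integral_of_dominated_convergence (fun _ => (2 * C) ^ 2)
      (fun k => ((hf k).1.sub hg.1).norm.pow 2) (integrable_const _) hbound hlim
  have hnorm : ∀ k, ‖(hf k).toLp (f k) - hg.toLp g‖ = √(∫ a, ‖f k a - g a‖ ^ 2 ∂μ) := fun k => by
    rw [← MemLp.toLp_sub, ← Real.sqrt_sq (norm_nonneg _), ((hf k).sub hg).norm_toLp_sq]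
    rfl
  rw [tendsto_iff_norm_sub_tendsto_zero]
  simp_rw [hnorm]
  simpa [Function.comp_def] using (Real.continuous_sqrt.tendsto 0).comp hsq

end L2

theorem ContinuousOn.memLp_restrict_Ioc {F : Type*} [NormedAddCommGroup F] {f : ℝ → F} {a b : ℝ}
    (hf : ContinuousOn f (Icc a b)) (p : ENNReal) : MemLp f p (volume.restrict (Ioc a b)) := by
  obtain ⟨C, hC⟩ := isCompact_Icc.exists_bound_of_continuousOn hf
  refine MemLp.of_bound ((hf.aestronglyMeasurable measurableSet_Icc).mono_measure
    (Measure.restrict_mono Ioc_subset_Icc_self le_rfl)) C ?_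
  filter_upwards [ae_restrict_mem measurableSet_Ioc] with t ht
  exact hC t (Ioc_subset_Icc_self ht)

section Primitive

variable {E : Type*} [NormedAddCommGroup E] [InnerProductSpace ℝ E] {T t : ℝ} {g : ℝ → E}

theorem continuousOn_primitive_of_memLp (hg : MemLp g 2 (volume.restrict (Ioc 0 T))) :
    ContinuousOn (fun t => ∫ s in 0..t, g s) (Icc 0 T) := by
  have hint : IntegrableOn g (Icc 0 T) := by
    rw [integrableOn_Icc_iff_integrableOn_Ioc]
    exact hg.integrable one_le_two
  exact (continuousOn_primitive hint).congr fun t ht => integral_of_le ht.1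

theorem inner_intervalIntegral_eq_inner_indicatorConstLp [CompleteSpace E]
    (hg : MemLp g 2 (volume.restrict (Ioc 0 T))) (ht : t ∈ Icc 0 T) (c : E) :
    ⟪c, ∫ s in 0..t, g s⟫ =
      ⟪indicatorConstLp 2 measurableSet_Ioc (measure_ne_top _ (Ioc 0 t)) c, hg.toLp g⟫ := by
  have hae : ∫ s in Ioc 0 t, hg.toLp g s ∂volume.restrict (Ioc 0 T) =
      ∫ s in Ioc 0 t, g s ∂volume.restrict (Ioc 0 T) :=
    integral_congr_ae (ae_restrict_of_ae hg.coeFn_toLp)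
  rw [L2.inner_indicatorConstLp_eq_inner_setIntegral, hae,
    Measure.restrict_restrict measurableSet_Ioc, inter_eq_self_of_subset_left (Ioc_subset_Ioc_right ht.2), integral_of_le ht.1]

theorem norm_intervalIntegral_le_sqrt_mul_norm_toLp [CompleteSpace E]
    (hg : MemLp g 2 (volume.restrict (Ioc 0 T))) (ht : t ∈ Icc 0 T) :
    ‖∫ s in 0..t, g s‖ ≤ √T * ‖hg.toLp g‖ := by
  set v := ∫ s in 0..t, g s
  have hmeas : (volume.restrict (Ioc 0 T)).real (Ioc 0 t) ≤ T := by
    rw [measureReal_restrict_apply measurableSet_Ioc,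
      inter_eq_self_of_subset_left (Ioc_subset_Ioc_right ht.2), Real.volume_real_Ioc_of_le ht.1]
    linarith [ht.2]
  have hind : ‖indicatorConstLp 2 measurableSet_Ioc
      (measure_ne_top (volume.restrict (Ioc 0 T)) (Ioc 0 t)) v‖ ≤ ‖v‖ * √T := by
    refine norm_indicatorConstLp_le.trans ?_
    rw [Real.sqrt_eq_rpow, ENNReal.toReal_ofNat]
    gcongr
  have hsq : ‖v‖ ^ 2 ≤ ‖v‖ * (√T * ‖hg.toLp g‖) := by
    rw [← real_inner_self_eq_norm_sq, inner_intervalIntegral_eq_inner_indicatorConstLp hg ht v]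
    calc _ ≤ _ := real_inner_le_norm _ _
      _ ≤ ‖v‖ * √T * ‖hg.toLp g‖ := by gcongr
      _ = _ := by ring
  nlinarith [norm_nonneg v, mul_nonneg (Real.sqrt_nonneg T) (norm_nonneg (hg.toLp g))]

theorem tendsto_intervalIntegral_of_tendsto_inner_toLp [FiniteDimensional ℝ E]
    {u : ℕ → ℝ → E} (hu : ∀ k, MemLp (u k) 2 (volume.restrict (Ioc 0 T)))
    (hg : MemLp g 2 (volume.restrict (Ioc 0 T)))
    (h : ∀ G, Tendsto (fun k => ⟪(hu k).toLp (u k), G⟫) atTop (𝓝 ⟪hg.toLp g, G⟫))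
    (ht : t ∈ Icc 0 T) :
    Tendsto (fun k => ∫ s in 0..t, u k s) atTop (𝓝 (∫ s in 0..t, g s)) := by
  refine tendsto_of_tendsto_inner fun c => ?_
  simp_rw [real_inner_comm c, inner_intervalIntegral_eq_inner_indicatorConstLp (hu _) ht,
    inner_intervalIntegral_eq_inner_indicatorConstLp hg ht,
    real_inner_comm _ (indicatorConstLp _ _ _ c)]
  exact h _

end Primitive

section H1Path

variable {n : ℕ} {T t : ℝ} {φ dφ : ℝ → EuclideanSpace ℝ (Fin n)}
  {φk dφk : ℕ → ℝ → EuclideanSpace ℝ (Fin n)}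

theorem IsH1Path.continuousOn (hφ : IsH1Path T φ dφ) : ContinuousOn φ (Icc 0 T) :=
  (continuousOn_const.add (continuousOn_primitive_of_memLp hφ.1)).congr hφ.2

theorem IsH1Path.integral_inner_eq (hT : 0 ≤ T) (hφ : IsH1Path T φ dφ)
    (c : EuclideanSpace ℝ (Fin n)) :
    ∫ t in 0..T, ⟪φ t, c⟫ = T * ⟪φ 0, c⟫ + ∫ t in 0..T, ⟪∫ s in 0..t, dφ s, c⟫ := by
  have hprim : ContinuousOn (fun t => ⟪∫ s in 0..t, dφ s, c⟫) (Icc 0 T) :=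
    (continuousOn_primitive_of_memLp hφ.1).inner continuousOn_const
  rw [integral_congr (g := fun t => ⟪φ 0, c⟫ + ⟪∫ s in 0..t, dφ s, c⟫) fun t ht => by
      rw [uIcc_of_le hT] at ht
      simp only [hφ.2 t ht, inner_add_left],
    integral_add intervalIntegrable_const (hprim.intervalIntegrable_of_Icc hT),
    intervalIntegral.integral_const, smul_eq_mul, sub_zero]

theorem IsH1Path.memLp_comp {F : Type*} [NormedAddCommGroup F] (hφ : IsH1Path T φ dφ)
    {b : EuclideanSpace ℝ (Fin n) → F} (hb : Continuous b) :
    MemLp (fun t => b (φ t)) 2 (volume.restrict (Ioc 0 T)) :=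
  (hb.comp_continuousOn hφ.continuousOn).memLp_restrict_Ioc 2

theorem WeakH1Tendsto.tendsto_inner_toLp (hweak : WeakH1Tendsto T φk dφk φ dφ) (hT : 0 ≤ T)
    (hk : ∀ k, IsH1Path T (φk k) (dφk k)) (hφ : IsH1Path T φ dφ)
    (G : Lp (EuclideanSpace ℝ (Fin n)) 2 (volume.restrict (Ioc 0 T))) :
    Tendsto (fun k => ⟪(hk k).1.toLp (dφk k), G⟫) atTop (𝓝 ⟪hφ.1.toLp dφ, G⟫) := by
  simpa [MemLp.inner_toLp_left, integral_of_le hT] using hweak 0 G MemLp.zero (Lp.memLp G)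

theorem WeakH1Tendsto.tendsto_integral_inner (hweak : WeakH1Tendsto T φk dφk φ dφ)
    (c : EuclideanSpace ℝ (Fin n)) :
    Tendsto (fun k => ∫ t in 0..T, ⟪φk k t, c⟫) atTop (𝓝 (∫ t in 0..T, ⟪φ t, c⟫)) := by
  simpa using hweak (fun _ => c) 0 (memLp_const c) MemLp.zero

theorem WeakH1Tendsto.tendsto_integral_inner_primitive (hweak : WeakH1Tendsto T φk dφk φ dφ)
    (hT : 0 ≤ T) (hk : ∀ k, IsH1Path T (φk k) (dφk k)) (hφ : IsH1Path T φ dφ)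
    (c : EuclideanSpace ℝ (Fin n)) :
    Tendsto (fun k => ∫ t in 0..T, ⟪∫ s in 0..t, dφk k s, c⟫) atTop
      (𝓝 (∫ t in 0..T, ⟪∫ s in 0..t, dφ s, c⟫)) := by
  have hD := hweak.tendsto_inner_toLp hT hk hφ
  obtain ⟨M, hM⟩ := exists_norm_le_of_tendsto_inner hD
  refine tendsto_integral_filter_of_dominated_convergence (fun _ => √T * M * ‖c‖)
    (Eventually.of_forall fun k => ?_) (Eventually.of_forall fun k => ?_)
    intervalIntegrable_const ?_
  · have hcont : ContinuousOn (fun t => ⟪∫ s in 0..t, dφk k s, c⟫) (Icc 0 T) :=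
      (continuousOn_primitive_of_memLp (hk k).1).inner continuousOn_const
    rw [uIoc_of_le hT]
    exact (hcont.memLp_restrict_Ioc 1).1
  · refine Eventually.of_forall fun t ht => ?_
    rw [uIoc_of_le hT] at ht
    calc ‖⟪∫ s in 0..t, dφk k s, c⟫‖ ≤ ‖∫ s in 0..t, dφk k s‖ * ‖c‖ := norm_inner_le_norm _ _
      _ ≤ √T * M * ‖c‖ := by
        gcongr
        exact (norm_intervalIntegral_le_sqrt_mul_norm_toLp (hk k).1 (Ioc_subset_Icc_self ht)).trans
          (by gcongr; exact hM k)
  · refine Eventually.of_forall fun t ht => ?_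
    rw [uIoc_of_le hT] at ht
    exact (tendsto_intervalIntegral_of_tendsto_inner_toLp _ _ hD
      (Ioc_subset_Icc_self ht)).inner tendsto_const_nhds

theorem WeakH1Tendsto.tendsto_apply_zero (hweak : WeakH1Tendsto T φk dφk φ dφ) (hT : 0 < T)
    (hk : ∀ k, IsH1Path T (φk k) (dφk k)) (hφ : IsH1Path T φ dφ) :
    Tendsto (fun k => φk k 0) atTop (𝓝 (φ 0)) := by
  refine tendsto_of_tendsto_inner fun c => ?_
  have hval : ∀ {ψ dψ}, IsH1Path T ψ dψ →
      ⟪ψ 0, c⟫ = ((∫ t in 0..T, ⟪ψ t, c⟫) - ∫ t in 0..T, ⟪∫ s in 0..t, dψ s, c⟫) / T :=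
    fun hψ => by
      rw [hψ.integral_inner_eq hT.le]
      field_simp
      ring
  simp_rw [hval (hk _), hval hφ]
  exact ((hweak.tendsto_integral_inner c).sub
    (hweak.tendsto_integral_inner_primitive hT.le hk hφ c)).div_const T

theorem WeakH1Tendsto.tendsto_apply (hweak : WeakH1Tendsto T φk dφk φ dφ) (hT : 0 < T)
    (hk : ∀ k, IsH1Path T (φk k) (dφk k)) (hφ : IsH1Path T φ dφ) (ht : t ∈ Icc 0 T) :
    Tendsto (fun k => φk k t) atTop (𝓝 (φ t)) := by
  simp_rw [(hk _).2 t ht, hφ.2 t ht]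
  exact (hweak.tendsto_apply_zero hT hk hφ).add (tendsto_intervalIntegral_of_tendsto_inner_toLp _ _
    (hweak.tendsto_inner_toLp hT.le hk hφ) ht)

theorem WeakH1Tendsto.exists_norm_le (hweak : WeakH1Tendsto T φk dφk φ dφ) (hT : 0 < T)
    (hk : ∀ k, IsH1Path T (φk k) (dφk k)) (hφ : IsH1Path T φ dφ) :
    ∃ C, ∀ k, ∀ t ∈ Icc 0 T, ‖φk k t‖ ≤ C := by
  obtain ⟨M, hM⟩ := exists_norm_le_of_tendsto_inner (hweak.tendsto_inner_toLp hT.le hk hφ)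
  obtain ⟨C₀, hC₀⟩ := (hweak.tendsto_apply_zero hT hk hφ).norm.bddAbove_range
  refine ⟨C₀ + √T * M, fun k t ht => ?_⟩
  rw [(hk k).2 t ht]
  calc ‖φk k 0 + ∫ s in 0..t, dφk k s‖ ≤ ‖φk k 0‖ + ‖∫ s in 0..t, dφk k s‖ := norm_add_le _ _
    _ ≤ C₀ + √T * M := by
      gcongr
      · exact hC₀ ⟨k, rfl⟩
      · exact (norm_intervalIntegral_le_sqrt_mul_norm_toLp (hk k).1 ht).trans
          (by gcongr; exact hM k)

end H1Path

theorem action_eq_half_norm_toLp_sub_sq {n : ℕ}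
    {b : EuclideanSpace ℝ (Fin n) → EuclideanSpace ℝ (Fin n)} {T : ℝ} (hT : 0 ≤ T) {ψ dψ : ℝ → EuclideanSpace ℝ (Fin n)}
    (hdψ : MemLp dψ 2 (volume.restrict (Ioc 0 T)))
    (hbψ : MemLp (fun t => b (ψ t)) 2 (volume.restrict (Ioc 0 T))) :
    action b T ψ dψ = 1 / 2 * ‖hdψ.toLp dψ - hbψ.toLp _‖ ^ 2 := by
  rw [← MemLp.toLp_sub, MemLp.norm_toLp_sq, action, integral_of_le hT]
  rfl

/-- lim-inf inequality: `S_T` is sequentially weakly lower semicontinuous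
on `H¹((0,T);ℝⁿ)`: if `φ_h ⇀ φ` weakly in `H¹`, then `S_T(φ) ≤ liminf S_T(φ_h)`. -/
theorem stmt8 {n : ℕ} (b : EuclideanSpace ℝ (Fin n) → EuclideanSpace ℝ (Fin n))
    (K : NNReal) (hb : LipschitzWith K b)
    (T : ℝ) (hT : 0 < T)
    (φk dφk : ℕ → ℝ → EuclideanSpace ℝ (Fin n))
    (φ dφ : ℝ → EuclideanSpace ℝ (Fin n))
    (hk : ∀ k, IsH1Path T (φk k) (dφk k))
    (hφ : IsH1Path T φ dφ)
    (hweak : WeakH1Tendsto T φk dφk φ dφ) :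
    action b T φ dφ ≤ Filter.liminf (fun k => action b T (φk k) (dφk k)) atTop := by
  have hbk k := (hk k).memLp_comp hb.continuous
  have hbφ := hφ.memLp_comp hb.continuous
  obtain ⟨C, hC⟩ := hweak.exists_norm_le hT hk hφ
  obtain ⟨Cb, hCb⟩ :=
    (isCompact_closedBall 0 C).exists_bound_of_continuousOn hb.continuous.continuousOn
  have hB : Tendsto (fun k => (hbk k).toLp _) atTop (𝓝 (hbφ.toLp _)) := by
    refine tendsto_toLp_of_tendsto_ae_of_norm_le hbk hbφ (C := Cb) (fun k => ?_) ?_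
    · filter_upwards [ae_restrict_mem measurableSet_Ioc] with t ht
      exact hCb _ (mem_closedBall_zero_iff.2 (hC k t (Ioc_subset_Icc_self ht)))
    · filter_upwards [ae_restrict_mem measurableSet_Ioc] with t ht
      exact (hb.continuous.tendsto _).comp (hweak.tendsto_apply hT hk hφ (Ioc_subset_Icc_self ht))
  have hF G : Tendsto (fun k => ⟪(hk k).1.toLp _ - (hbk k).toLp _, G⟫) atTop
      (𝓝 ⟪hφ.1.toLp _ - hbφ.toLp _, G⟫) := by
    simp_rw [inner_sub_left]
    exact (hweak.tendsto_inner_toLp hT.le hk hφ G).sub (hB.inner tendsto_const_nhds)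
  simp_rw [action_eq_half_norm_toLp_sub_sq hT.le (hk _).1 (hbk _),
    action_eq_half_norm_toLp_sub_sq hT.le hφ.1 hbφ]
  exact half_norm_sq_le_liminf_of_tendsto_inner hF
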